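/- Let e1, e2 ∈ ℝ^d, k ∈ {1,…,d} with k < d, and ε > 0. Then ℓ_Ftr(e2; e1, k) ≥ (ε/k) · |TopFeatures(e1;k) \ TopFeatures(e2;k)|, i.e., the feature-agreement surrogate loss is at least ε/k times the number of top-k features of e1 that are not among the top-k features of e2. -/
import Mathlib


open Finset

/-- `rnk x i` is the rank (1-indexed) of `|x i|` among `|x 1|,…,|x d|` in descending
order, ties broken by index: it is the unique bijection `[d] → [d]` with
`rnk x i < rnk x j` iff `|x i| > |x j|`, or `|x i| = |x j|` and `i < j`. -/
noncomputable def rnk {d : ℕ} (x : Fin d → ℝ) (i : Fin d) : ℕ :=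
  (Finset.univ.filter (fun j => |x i| < |x j| ∨ (|x j| = |x i| ∧ j ≤ i))).card

/-- `TopFeatures(x;k)`: indices whose rank is at most `k`. -/
noncomputable def topFeat {d : ℕ} (x : Fin d → ℝ) (k : ℕ) : Finset (Fin d) :=
  Finset.univ.filter (fun i => rnk x i ≤ k)

/-- `sign(t) = 1` if `t ≥ 0`, else `-1`. -/
noncomputable def sgn (t : ℝ) : ℝ := if 0 ≤ t then 1 else -1

/-- Top-`k` feature agreement. -/
noncomputable def featAgree {d : ℕ} (e1 e2 : Fin d → ℝ) (k : ℕ) : ℝ :=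
  ((topFeat e1 k ∩ topFeat e2 k).card : ℝ) / k

/-- Top-`k` rank agreement. -/
noncomputable def rankAgree {d : ℕ} (e1 e2 : Fin d → ℝ) (k : ℕ) : ℝ :=
  (((topFeat e1 k ∩ topFeat e2 k).filter (fun i => rnk e1 i = rnk e2 i)).card : ℝ) / k

/-- Top-`k` sign agreement. -/
noncomputable def signAgree {d : ℕ} (e1 e2 : Fin d → ℝ) (k : ℕ) : ℝ :=
  (((topFeat e1 k ∩ topFeat e2 k).filter (fun i => sgn (e1 i) = sgn (e2 i))).card : ℝ) / k

/-- Top-`k` signed-rank agreement. -/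
noncomputable def signedRankAgree {d : ℕ} (e1 e2 : Fin d → ℝ) (k : ℕ) : ℝ :=
  (((topFeat e1 k ∩ topFeat e2 k).filter
      (fun i => sgn (e1 i) = sgn (e2 i) ∧ rnk e1 i = rnk e2 i)).card : ℝ) / k

/-- `ψ_feat(e2)`: max of `|e2 i|` over `i ∉ TopFeatures(e1;k)` when `k < d`, else `-ε`. -/
noncomputable def psiFeat {d : ℕ} (e1 e2 : Fin d → ℝ) (k : ℕ) (ε : ℝ) : ℝ :=
  if k < d then sSup ((fun i => |e2 i|) '' {i : Fin d | i ∉ topFeat e1 k}) else -ε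

/-- Feature-agreement surrogate loss `ℓ_Ftr(e2; e1, k)`. -/
noncomputable def lossFtr {d : ℕ} (e2 e1 : Fin d → ℝ) (k : ℕ) (ε : ℝ) : ℝ :=
  (∑ i ∈ topFeat e1 k, max 0 (psiFeat e1 e2 k ε - |e2 i| + ε)) / k

/-- `sortD a j` is the `j`-th largest entry of `a` (for `1 ≤ j ≤ d`). -/
noncomputable def sortD {d : ℕ} (a : Fin d → ℝ) (j : ℕ) : ℝ :=
  if h : d - j < d then (a ∘ Tuple.sort a) ⟨d - j, h⟩ else 0

/-- Rank-agreement surrogate loss `ℓ_Rnk(e2; e1, k)`: the sum over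
`I = {(j,i) : j ∈ [k], rank(e1,i) = j}` is realized as the sum over
`i ∈ TopFeatures(e1;k)` with `j = rnk e1 i`. -/
noncomputable def lossRnk {d : ℕ} (e2 e1 : Fin d → ℝ) (k : ℕ) (ε : ℝ) : ℝ :=
  (∑ i ∈ topFeat e1 k,
    max 0 (sortD (Function.update (fun t => |e2 t|) i (-ε)) (rnk e1 i) - |e2 i| + ε)) / k

/-- `ψ_sign(e2)`: max of `|e2 i|` over `i ∉ TopFeatures(e1;k)` when `k < d`, else `0`. -/
noncomputable def psiSign {d : ℕ} (e1 e2 : Fin d → ℝ) (k : ℕ) : ℝ :=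
  if k < d then sSup ((fun i => |e2 i|) '' {i : Fin d | i ∉ topFeat e1 k}) else 0

/-- Sign-agreement surrogate loss `ℓ_Sgn(e2; e1, k)`. -/
noncomputable def lossSgn {d : ℕ} (e2 e1 : Fin d → ℝ) (k : ℕ) (ε : ℝ) : ℝ :=
  (∑ i ∈ topFeat e1 k, max 0 (psiSign e1 e2 k - sgn (e1 i) * e2 i + ε)) / k

/-- Signed-rank-agreement surrogate loss `ℓ_SgnRnk(e2; e1, k)`. -/
noncomputable def lossSgnRnk {d : ℕ} (e2 e1 : Fin d → ℝ) (k : ℕ) (ε : ℝ) : ℝ :=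
  (∑ i ∈ topFeat e1 k,
    max 0 (sortD (Function.update (fun t => |e2 t|) i 0) (rnk e1 i) - sgn (e1 i) * e2 i + ε)) / k

lemma rnk_lt_rnk {d : ℕ} (x : Fin d → ℝ) {i j : Fin d} (hij : j ≠ i)
    (h : |x i| < |x j| ∨ (|x j| = |x i| ∧ j ≤ i)) : rnk x j < rnk x i := by
  unfold rnk
  apply Finset.card_lt_card
  constructor
  · intro t ht
    simp only [Finset.mem_filter, Finset.mem_univ, true_and] at ht ⊢
    rcases ht with ht | ⟨ht1, ht2⟩
    · rcases h with h | ⟨h1, h2⟩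
      · exact Or.inl (lt_trans h ht)
      · exact Or.inl (h1 ▸ ht)
    · rcases h with h | ⟨h1, h2⟩
      · exact Or.inl (ht1 ▸ h)
      · exact Or.inr ⟨ht1.trans h1, ht2.trans h2⟩
  · intro hsub
    have hi : i ∈ Finset.univ.filter (fun t => |x i| < |x t| ∨ (|x t| = |x i| ∧ t ≤ i)) := by
      simp
    have := hsub hi
    simp only [Finset.mem_filter, Finset.mem_univ, true_and] at this
    rcases h with h | ⟨h1, h2⟩
    · rcases this with h' | ⟨h1', h2'⟩
      · exact absurd (h.trans h') (lt_irrefl _)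
      · exact absurd (h1' ▸ h) (lt_irrefl _)
    · rcases this with h' | ⟨h1', h2'⟩
      · exact absurd (h1 ▸ h') (lt_irrefl _)
      · exact hij (le_antisymm h2 h2')

lemma rnk_injective {d : ℕ} (x : Fin d → ℝ) : Function.Injective (rnk x) := by
  intro i j hij
  by_contra hne
  rcases lt_trichotomy (|x i|) (|x j|) with h | h | h
  · exact absurd hij (rnk_lt_rnk x (Ne.symm hne) (Or.inl h)).ne'
  · rcases le_total j i with hle | hle
    · exact absurd hij (rnk_lt_rnk x (Ne.symm hne) (Or.inr ⟨h.symm, hle⟩)).ne'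
    · exact absurd hij.symm (rnk_lt_rnk x hne (Or.inr ⟨h, hle⟩)).ne'
  · exact absurd hij.symm (rnk_lt_rnk x hne (Or.inl h)).ne'

lemma rnk_pos {d : ℕ} (x : Fin d → ℝ) (i : Fin d) : 1 ≤ rnk x i := by
  unfold rnk
  rw [Nat.one_le_iff_ne_zero, ← Nat.pos_iff_ne_zero, Finset.card_pos]
  exact ⟨i, by simp⟩

lemma card_topFeat_le {d : ℕ} (x : Fin d → ℝ) (k : ℕ) : (topFeat x k).card ≤ k := by
  have h : (topFeat x k).card = ((topFeat x k).image (rnk x)).card :=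
    (Finset.card_image_of_injective _ (rnk_injective x)).symm
  rw [h]
  have hsub : (topFeat x k).image (rnk x) ⊆ Finset.Icc 1 k := by
    intro n hn
    simp only [Finset.mem_image] at hn
    obtain ⟨i, hi, rfl⟩ := hn
    simp only [topFeat, Finset.mem_filter] at hi
    exact Finset.mem_Icc.mpr ⟨rnk_pos x i, hi.2⟩
  calc ((topFeat x k).image (rnk x)).card ≤ (Finset.Icc 1 k).card := Finset.card_le_card hsub
    _ = k := by simp

lemma psiFeat_ge {d : ℕ} (e1 e2 : Fin d → ℝ) (k : ℕ) (hkd : k < d) (ε : ℝ)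
    {i : Fin d} (hi : i ∉ topFeat e2 k) : |e2 i| ≤ psiFeat e1 e2 k ε := by
  have hrnk : k < rnk e2 i := by
    simp only [topFeat, Finset.mem_filter, Finset.mem_univ, true_and, not_le] at hi
    exact hi
  set S := Finset.univ.filter (fun j => |e2 i| < |e2 j| ∨ (|e2 j| = |e2 i| ∧ j ≤ i)) with hS
  have hcard : k < S.card := hrnk
  have : ∃ j ∈ S, j ∉ topFeat e1 k := by
    by_contra hc
    push_neg at hc
    have : S ⊆ topFeat e1 k := fun j hj => hc j hj
    exact absurd ((Finset.card_le_card this).trans (card_topFeat_le e1 k)) (not_le.mpr hcard)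
  obtain ⟨j, hjS, hjT⟩ := this
  have hle : |e2 i| ≤ |e2 j| := by
    simp only [hS, Finset.mem_filter, Finset.mem_univ, true_and] at hjS
    rcases hjS with h | ⟨h, _⟩
    · exact h.le
    · exact h.ge
  have hmem : |e2 j| ∈ (fun i => |e2 i|) '' {i : Fin d | i ∉ topFeat e1 k} :=
    ⟨j, hjT, rfl⟩
  have hbdd : BddAbove ((fun i => |e2 i|) '' {i : Fin d | i ∉ topFeat e1 k}) :=
    (Set.toFinite _).bddAbove
  calc |e2 i| ≤ |e2 j| := hle
    _ ≤ sSup ((fun i => |e2 i|) '' {i : Fin d | i ∉ topFeat e1 k}) := le_csSup hbdd hmem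
    _ = psiFeat e1 e2 k ε := by simp [psiFeat, hkd]

/-- For `k < d` and `ε > 0`, the feature-agreement surrogate loss is at least `ε/k`
times the number of top-`k` features of `e1` missing from the top-`k` features of `e2`. -/
theorem lossFtr_ge {d : ℕ} (e1 e2 : Fin d → ℝ) (k : ℕ)
    (hk : 1 ≤ k) (hkd : k < d) (ε : ℝ) (hε : 0 < ε) :
    ε / k * ((topFeat e1 k \ topFeat e2 k).card : ℝ) ≤ lossFtr e2 e1 k ε := by
  have hk0 : (0 : ℝ) < k := by exact_mod_cast hk
  have hsum : ε * ((topFeat e1 k \ topFeat e2 k).card : ℝ) ≤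
      ∑ i ∈ topFeat e1 k, max 0 (psiFeat e1 e2 k ε - |e2 i| + ε) := by
    calc ε * ((topFeat e1 k \ topFeat e2 k).card : ℝ)
        = ∑ _i ∈ topFeat e1 k \ topFeat e2 k, ε := by
          rw [Finset.sum_const, nsmul_eq_mul, mul_comm]
      _ ≤ ∑ i ∈ topFeat e1 k \ topFeat e2 k, max 0 (psiFeat e1 e2 k ε - |e2 i| + ε) := by
          apply Finset.sum_le_sum
          intro i hi
          have hi2 : i ∉ topFeat e2 k := (Finset.mem_sdiff.mp hi).2
          have := psiFeat_ge e1 e2 k hkd ε hi2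
          have : ε ≤ psiFeat e1 e2 k ε - |e2 i| + ε := by linarith
          exact this.trans (le_max_right _ _)
      _ ≤ ∑ i ∈ topFeat e1 k, max 0 (psiFeat e1 e2 k ε - |e2 i| + ε) := by
          apply Finset.sum_le_sum_of_subset_of_nonneg (Finset.sdiff_subset)
          intro i _ _
          exact le_max_left _ _
  unfold lossFtr
  rw [div_mul_eq_mul_div]
  gcongr
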